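/- Let p ∈ 𝒫^log(Γ) and 0 < w < p_-. Then there exists C > 0 such that for every x ∈ Γ, β > 1 and r > 0: ‖χ_{B(x,βr)}‖_{p(·)} ≤ C·β^{D/w}·‖χ_{B(x,r)}‖_{p(·)}, where D is the exponent fixed in standing hypothesis (a). -/

import Mathlib

open scoped ENNReal NNReal BigOperators
open Filter

namespace VarHardy

variable {Γ : Type*}

/-- The data of a weighted graph as in the paper: a countably infinite vertex set `Γ`,
a nonnegative symmetric weight `nu`, locally finite with uniformly bounded degree,
each vertex having a neighbour, and connectedness. -/
structure GraphData (Γ : Type*) where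
  nu : Γ → Γ → ℝ
  nu_nonneg : ∀ x y, 0 ≤ nu x y
  nu_symm : ∀ x y, nu x y = nu y x
  locFin : ∀ x, {y | 0 < nu x y}.Finite
  deg_pos : ∀ x, {y | 0 < nu x y}.Nonempty
  deg_bdd : ∃ N : ℕ, ∀ x, Nat.card {y // 0 < nu x y} ≤ N
  connected : ∀ x y : Γ, ∃ n : ℕ, ∃ w : ℕ → Γ,
    w 0 = x ∧ w n = y ∧ ∀ i < n, 0 < nu (w i) (w (i + 1))

/-- The weight `μ(x) = Σ_{y} ν(x,y)`. -/
noncomputable def GraphData.mu (G : GraphData Γ) (x : Γ) : ℝ := ∑' y, G.nu x y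

/-- The measure of a set `A ⊆ Γ`, valued in `[0,∞]`. -/
noncomputable def GraphData.muSet (G : GraphData Γ) (A : Set Γ) : ℝ≥0∞ :=
  ∑' x : A, ENNReal.ofReal (G.mu x)

/-- The graph distance: the least length of a path of consecutive neighbours. -/
noncomputable def GraphData.dist (G : GraphData Γ) (x y : Γ) : ℕ :=
  sInf {n : ℕ | ∃ w : ℕ → Γ, w 0 = x ∧ w n = y ∧ ∀ i < n, 0 < G.nu (w i) (w (i + 1))}

/-- The ball `B(x,r) = {y : d(x,y) < r}`. -/
def GraphData.ball (G : GraphData Γ) (x : Γ) (r : ℝ) : Set Γ := {y | (G.dist x y : ℝ) < r}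

/-- The Markov kernel `p(x,y) = ν(x,y)/μ(x)`. -/
noncomputable def GraphData.kernel (G : GraphData Γ) (x y : Γ) : ℝ := G.nu x y / G.mu x

/-- The iterated Markov kernel `p_n`, the kernel of `P^n` (for `n ≥ 1`). -/
noncomputable def GraphData.pn (G : GraphData Γ) : ℕ → Γ → Γ → ℝ
  | 0, x, y => ({x} : Set Γ).indicator 1 y
  | n + 1, x, y => ∑' z, G.kernel x z * G.pn n z y

/-- The Markov operator `P f(x) = Σ_y p(x,y) f(y)`. -/
noncomputable def GraphData.P (G : GraphData Γ) (f : Γ → ℂ) : Γ → ℂ :=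
  fun x => ∑' y, (G.kernel x y : ℂ) * f y

/-- The discrete Laplacian `L = I − P`. -/
noncomputable def GraphData.Lop (G : GraphData Γ) (f : Γ → ℂ) : Γ → ℂ :=
  fun x => f x - G.P f x

/-- The variable exponent quasinorm `‖g‖_{p(·)} ∈ [0,∞]` of an `[0,∞]`-valued function. -/
noncomputable def GraphData.vnorm (G : GraphData Γ) (p : Γ → ℝ) (g : Γ → ℝ≥0∞) : ℝ≥0∞ :=
  sInf {l : ℝ≥0∞ | 0 < l ∧ l ≠ ⊤ ∧ ∑' x, (g x / l) ^ p x * ENNReal.ofReal (G.mu x) ≤ 1}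

/-- The variable exponent quasinorm of a complex function. -/
noncomputable def GraphData.vnormC (G : GraphData Γ) (p : Γ → ℝ) (f : Γ → ℂ) : ℝ≥0∞ :=
  G.vnorm p (fun x => (‖f x‖₊ : ℝ≥0∞))

/-- The `L^q(Γ)` norm (`0<q<∞`) of an `[0,∞]`-valued function. -/
noncomputable def GraphData.lqnormE (G : GraphData Γ) (q : ℝ) (g : Γ → ℝ≥0∞) : ℝ≥0∞ :=
  (∑' x, g x ^ q * ENNReal.ofReal (G.mu x)) ^ (1 / q)

/-- The `L^q(Γ)` norm (`0<q<∞`) of a complex function. -/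
noncomputable def GraphData.lqnorm (G : GraphData Γ) (q : ℝ) (f : Γ → ℂ) : ℝ≥0∞ :=
  G.lqnormE q (fun x => (‖f x‖₊ : ℝ≥0∞))

/-- The `L^q(A)` norm of a complex function on a subset `A ⊆ Γ`. -/
noncomputable def GraphData.lqnormOn (G : GraphData Γ) (q : ℝ) (A : Set Γ) (f : Γ → ℂ) : ℝ≥0∞ :=
  (∑' x : A, (‖f x‖₊ : ℝ≥0∞) ^ q * ENNReal.ofReal (G.mu x)) ^ (1 / q)

/-- The `L^q(Γ)` norm for `q ∈ [1,∞]` (extended real exponent). -/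
noncomputable def GraphData.lqnormTop (G : GraphData Γ) (q : ℝ≥0∞) (f : Γ → ℂ) : ℝ≥0∞ :=
  if q = ⊤ then ⨆ x, (‖f x‖₊ : ℝ≥0∞) else G.lqnorm q.toReal f

/-- The centered Hardy–Littlewood maximal operator. -/
noncomputable def GraphData.maximal (G : GraphData Γ) (f : Γ → ℂ) (x : Γ) : ℝ≥0∞ :=
  ⨆ r : {t : ℝ // 0 < t},
    (∑' y : G.ball x r.1, (‖f y‖₊ : ℝ≥0∞) * ENNReal.ofReal (G.mu y)) / G.muSet (G.ball x r.1)

/-- The radial maximal function `ℳ₊ f(x) = sup_n |P^n f(x)|`. -/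
noncomputable def GraphData.radialMax (G : GraphData Γ) (f : Γ → ℂ) (x : Γ) : ℝ≥0∞ :=
  ⨆ n : ℕ, (‖(G.P)^[n] f x‖₊ : ℝ≥0∞)

/-- The square function `S_L`. -/
noncomputable def GraphData.SL (G : GraphData Γ) (f : Γ → ℂ) (x : Γ) : ℝ≥0∞ :=
  (∑' k : ℕ+, ∑' y : G.ball x ((k : ℕ) : ℝ),
      (‖((k : ℕ) : ℂ) * G.Lop ((G.P)^[(k : ℕ) / 2] f) y‖₊ : ℝ≥0∞) ^ (2 : ℕ) *
        ENNReal.ofReal (G.mu y) /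
        (((k : ℕ) : ℝ≥0∞) * G.muSet (G.ball (y : Γ) ((k : ℕ) : ℝ)))) ^ (1 / 2 : ℝ)

/-- The tent-space operator `𝒜` acting on functions on `Γ × ℕ₊`. -/
noncomputable def GraphData.calA (G : GraphData Γ) (f : Γ → ℕ+ → ℂ) (x : Γ) : ℝ≥0∞ :=
  (∑' k : ℕ+, ∑' y : G.ball x ((k : ℕ) : ℝ),
      (‖f y k‖₊ : ℝ≥0∞) ^ (2 : ℕ) * ENNReal.ofReal (G.mu y) /
        (((k : ℕ) : ℝ≥0∞) * G.muSet (G.ball x ((k : ℕ) : ℝ)))) ^ (1 / 2 : ℝ)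

/-- The Littlewood–Paley square function `G_{L,N}`. -/
noncomputable def GraphData.GLN (G : GraphData Γ) (N : ℕ) (f : Γ → ℂ) (x : Γ) : ℝ≥0∞ :=
  (∑' k : ℕ+, ((k : ℕ) : ℝ≥0∞) ^ (2 * N - 1) *
      (‖(G.Lop)^[N] ((G.P)^[(k : ℕ)] f) x‖₊ : ℝ≥0∞) ^ (2 : ℕ)) ^ (1 / 2 : ℝ)

/-- `p_- = inf p`. -/
noncomputable def pminus (p : Γ → ℝ) : ℝ := ⨅ x, p x

/-- `p_+ = sup p`. -/
noncomputable def pplus (p : Γ → ℝ) : ℝ := ⨆ x, p x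

/-- `𝔭 = min{1, p_-}`. -/
noncomputable def frakp (p : Γ → ℝ) : ℝ := min 1 (pminus p)

/-- `p ∈ 𝒫^log(Γ)`: `p` is positive with `0 < p_- ≤ p_+ < ∞`, and `1/p` is
log-Hölder continuous. -/
def GraphData.LogHolder (G : GraphData Γ) (p : Γ → ℝ) : Prop :=
  (∀ x, 0 < p x) ∧ 0 < pminus p ∧ BddAbove (Set.range p) ∧
  (∃ C > 0, ∀ x y : Γ, x ≠ y →
    |1 / p x - 1 / p y| ≤ C / Real.log (Real.exp 1 + 1 / (G.dist x y : ℝ))) ∧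
  (∃ x₀ : Γ, ∃ a : ℝ, ∃ C > 0, ∀ x : Γ,
    |1 / p x - a| ≤ C / Real.log (Real.exp 1 + (G.dist x x₀ : ℝ)))

/-- The standing hypotheses (a), (b), (c) of the paper, together with finiteness of balls
and `μ(Γ) = ∞`, with doubling dimension `D`. -/
def GraphData.Standing (G : GraphData Γ) (D : ℝ) : Prop :=
  0 < D ∧
  (∃ C > 0, ∀ (x : Γ) (r s : ℝ), 0 < s → s ≤ r →
    G.muSet (G.ball x r) ≤ ENNReal.ofReal (C * (r / s) ^ D) * G.muSet (G.ball x s)) ∧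
  (∃ C > 0, ∃ c > 0, ∀ n : ℕ, 1 ≤ n → ∀ x y : Γ,
    ENNReal.ofReal (G.pn n x y) ≤
      ENNReal.ofReal (C * G.mu y * Real.exp (-c * ((G.dist x y : ℝ)) ^ 2 / n)) /
        G.muSet (G.ball x (Real.sqrt n))) ∧
  (∃ α > 0, (∀ x, 0 < G.nu x x) ∧ ∀ x y, 0 < G.nu x y → α * G.mu x ≤ G.nu x y) ∧
  (∀ (x : Γ) (r : ℝ), (G.ball x r).Finite) ∧
  G.muSet Set.univ = ⊤

/-- The `[0,∞]`-valued indicator function of a set. -/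
noncomputable def indE (B : Set Γ) : Γ → ℝ≥0∞ := B.indicator 1

/-- The quantity `𝒜({λ_j},{B_j})`. -/
noncomputable def GraphData.scrA (G : GraphData Γ) (p : Γ → ℝ) (lam : ℕ → ℂ)
    (B : ℕ → Set Γ) : ℝ≥0∞ :=
  G.vnorm p (fun x =>
    (∑' j : ℕ, (((‖lam j‖₊ : ℝ≥0∞) * indE (B j) x) / G.vnorm p (indE (B j))) ^ frakp p) ^
      (1 / frakp p))

/-- An `(r,p(·),M)`-atom associated with the ball `B(xB,rB)`. -/
def GraphData.IsAtom (G : GraphData Γ) (p : Γ → ℝ) (r : ℝ) (M : ℕ) (a : Γ → ℂ)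
    (xB : Γ) (rB : ℝ) : Prop :=
  1 ≤ rB ∧ ∃ b : Γ → ℂ,
    a = (G.Lop)^[M] b ∧
    (∀ k ≤ M, ∀ x, (G.Lop)^[k] b x ≠ 0 → x ∈ G.ball xB rB) ∧
    (∀ k ≤ M, G.lqnorm r ((G.Lop)^[k] b) ≤
      ENNReal.ofReal (rB ^ (M - k)) * G.muSet (G.ball xB rB) ^ (1 / r) /
        G.vnorm p (indE (G.ball xB rB)))

/-- The annuli `𝔖_j(B)`: `𝔖_0(B) = B` and `𝔖_j(B) = B(x_B,2^{j+1}r_B) ∖ B(x_B,2^{j−1}r_B)`. -/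
def GraphData.annulus (G : GraphData Γ) (xB : Γ) (rB : ℝ) : ℕ → Set Γ
  | 0 => G.ball xB rB
  | j + 1 => G.ball xB (2 ^ (j + 2) * rB) \ G.ball xB (2 ^ j * rB)

/-- A `(q,p(·),M,ε)`-molecule associated with the ball `B(xB,rB)`. -/
def GraphData.IsMolecule (G : GraphData Γ) (p : Γ → ℝ) (q : ℝ) (M : ℕ) (ε : ℝ)
    (m : Γ → ℂ) (xB : Γ) (rB : ℝ) : Prop :=
  1 ≤ rB ∧ ∃ b : Γ → ℂ,
    m = (G.Lop)^[M] b ∧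
    ∀ k ≤ M, ∀ j : ℕ,
      G.lqnormOn q (G.annulus xB rB j) ((G.Lop)^[k] b) ≤
        ENNReal.ofReal (rB ^ (M - k) * 2 ^ (-(j : ℝ) * ε)) *
          G.muSet (G.ball xB (2 ^ j * rB)) ^ (1 / q) /
            G.vnorm p (indE (G.ball xB (2 ^ j * rB)))

/-- A `(T_2^{p(·)},q)`-atom associated with the ball `B(xB,rB)`, `rB ≥ 1`:
supported in the tent `T(B)` and with `‖𝒜a‖_{L^q} ≤ μ(B)^{1/q}‖χ_B‖_{p(·)}^{-1}`. -/
def GraphData.IsTentAtom (G : GraphData Γ) (p : Γ → ℝ) (q : ℝ) (a : Γ → ℕ+ → ℂ)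
    (xB : Γ) (rB : ℝ) : Prop :=
  1 ≤ rB ∧
  (∀ (y : Γ) (k : ℕ+), a y k ≠ 0 → (G.dist xB y : ℝ) ≤ rB - (k : ℕ)) ∧
  G.lqnormE q (G.calA a) ≤ G.muSet (G.ball xB rB) ^ (1 / q) / G.vnorm p (indE (G.ball xB rB))

/-- A `(2,p(·))`-atom (Coifman–Weiss type, with cancellation). -/
def GraphData.IsCWAtom (G : GraphData Γ) (p : Γ → ℝ) (a : Γ → ℂ) (xB : Γ) (rB : ℝ) : Prop :=
  (∀ x, a x ≠ 0 → x ∈ G.ball xB rB) ∧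
  G.lqnorm 2 a ≤ G.muSet (G.ball xB rB) ^ (1 / 2 : ℝ) / G.vnorm p (indE (G.ball xB rB)) ∧
  ∑' x : G.ball xB rB, a x * (G.mu x : ℂ) = 0

/-- `ckc k K = c_{k,K+1}` where `c_{k,1} = 1` and `c_{k,N+1} = Σ_{i=0}^k c_{i,N}`. -/
def ckc : ℕ → ℕ → ℕ
  | _, 0 => 1
  | k, K + 1 => ∑ i ∈ Finset.range (k + 1), ckc i K

/-- The `k`-th term of the series defining `Π_M f`. -/
noncomputable def GraphData.PiMterm (G : GraphData Γ) (M : ℕ) (f : Γ → ℕ+ → ℂ) (k : ℕ)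
    (x : Γ) : ℂ :=
  ((ckc k M : ℂ) / ((k : ℂ) + 1)) *
    (G.Lop)^[M] ((G.P)^[k / 2] (fun y => f y ⟨k + 1, Nat.succ_pos k⟩)) x

/-- The operator `Π_M`. -/
noncomputable def GraphData.PiM (G : GraphData Γ) (M : ℕ) (f : Γ → ℕ+ → ℂ) (x : Γ) : ℂ :=
  ∑' k : ℕ, G.PiMterm M f k x

/-- Muckenhoupt `A_q(Γ)` weights, `1 < q < ∞`. -/
def GraphData.IsAq (G : GraphData Γ) (q : ℝ) (w : Γ → ℝ) : Prop :=
  (∀ x, 0 < w x) ∧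
  ∃ C > 0, ∀ (x : Γ) (r : ℝ), 0 < r →
    ((∑' y : G.ball x r, ENNReal.ofReal (w y * G.mu y)) / G.muSet (G.ball x r)) *
      (((∑' y : G.ball x r, ENNReal.ofReal (w y ^ (1 - q / (q - 1)) * G.mu y)) /
        G.muSet (G.ball x r)) ^ (q - 1)) ≤ ENNReal.ofReal C

/-- The graph gradient `∇h(x) = ((1/2)Σ_y p(x,y)|h(x)−h(y)|²)^{1/2}`. -/
noncomputable def GraphData.grad (G : GraphData Γ) (h : Γ → ℂ) (x : Γ) : ℝ :=
  Real.sqrt ((1 / 2) * ∑' y, G.kernel x y * ‖h x - h y‖ ^ 2)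

/-- The Taylor coefficients `β_k` of `(1−z)^{−1/2}`. -/
noncomputable def rieszBeta (k : ℕ) : ℝ := (Nat.choose (2 * k) k : ℝ) / 4 ^ k


/-!
Let `a` be the limit of `1 / p` at infinity. The norm `‖χ_B‖_{p(·)}` is comparable to `μ(B) ^ a`
uniformly over all balls `B`, and then the theorem follows from doubling,
`μ(B(x, βr)) ^ a ≤ (C_D β ^ D μ(B(x, r))) ^ a`, with `β ^ (D a) ≤ β ^ (D / w)` as `a ≤ 1 / p_-`.

The modular of `χ_B / (A μ(B) ^ a)` only involves the factors `μ(B) ^ (1 / p z - a)`, `z ∈ B`.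
If `B = B(x, r)` with `2r ≤ d(x, x₀)`, doubling gives `|log μ(B)| ≲ log (e + d(x, x₀))`, while
`|1 / p z - a| ≲ 1 / log (e + d(x, x₀))` on `B`, so all these factors are bounded above and
below. Otherwise `μ(B)` is bounded below. If `μ(B)` is large, the points of `B` where the
exponent may still be far from `a` lie in `B(x₀, μ(B) ^ ε)`, whose mass is at most
`C μ(B) ^ (ε D)`, negligible for small `ε`; balls of bounded mass are handled crudely.
-/

theorem rpow_le_exp_of_abs_mul_abs_log_le {m u K : ℝ} (hm : 0 < m) (h : |u| * |Real.log m| ≤ K) :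
    m ^ u ≤ Real.exp K := by
  rw [Real.rpow_def_of_pos hm, Real.exp_le_exp]
  exact (le_abs_self _).trans (by rwa [abs_mul, mul_comm])

theorem exp_neg_le_rpow_of_abs_mul_abs_log_le {m u K : ℝ} (hm : 0 < m)
    (h : |u| * |Real.log m| ≤ K) : Real.exp (-K) ≤ m ^ u := by
  rw [Real.rpow_def_of_pos hm, Real.exp_le_exp]
  exact neg_le_of_abs_le (by rwa [abs_mul, mul_comm])

theorem min_one_rpow_le_rpow {m₀ m q Q : ℝ} (hm₀ : 0 < m₀) (hm : m₀ ≤ m) (hq : 0 ≤ q)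
    (hqQ : q ≤ Q) : min 1 (m₀ ^ Q) ≤ m ^ q := by
  rcases le_or_gt 1 m with h1 | h1
  · exact (min_le_left _ _).trans (Real.one_le_rpow h1 hq)
  · calc min 1 (m₀ ^ Q) ≤ m₀ ^ Q := min_le_right _ _
      _ ≤ m ^ Q := Real.rpow_le_rpow hm₀.le hm (hq.trans hqQ)
      _ ≤ m ^ q := Real.rpow_le_rpow_of_exponent_ge (hm₀.trans_le hm) h1.le hqQ

theorem inv_mul_rpow_rpow_le {m s A K q : ℝ} (hm : 0 < m) (hA : 0 < A) (hq : 0 < q)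
    (hK : |1 / q - s| * |Real.log m| ≤ K) :
    (A * m ^ s)⁻¹ ^ q ≤ (Real.exp K / A) ^ q * m⁻¹ := by
  have hsplit : (A * m ^ s)⁻¹ = m ^ (1 / q - s) / A * m ^ (-(1 / q)) := by
    rw [div_mul_eq_mul_div, ← Real.rpow_add hm, show 1 / q - s + -(1 / q) = -s by ring,
      Real.rpow_neg hm.le, mul_inv, div_eq_mul_inv, mul_comm]
  rw [hsplit, Real.mul_rpow (by positivity) (by positivity), ← Real.rpow_mul hm.le,
    neg_mul, one_div_mul_cancel hq.ne', Real.rpow_neg_one]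
  gcongr
  exact rpow_le_exp_of_abs_mul_abs_log_le hm hK

namespace GraphData

/-! ### Graph distance -/

section Distance

variable (G : GraphData Γ)

def HasPath (n : ℕ) (x y : Γ) : Prop :=
  ∃ w : ℕ → Γ, w 0 = x ∧ w n = y ∧ ∀ i < n, 0 < G.nu (w i) (w (i + 1))

variable {G}

theorem HasPath.symm {n : ℕ} {x y : Γ} (h : G.HasPath n x y) : G.HasPath n y x := by
  obtain ⟨w, h0, hn, hw⟩ := h
  refine ⟨fun i => w (n - i), by simp [hn], by simp [h0], fun i hi => ?_⟩
  show 0 < G.nu (w (n - i)) (w (n - (i + 1)))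
  rw [G.nu_symm, show n - i = n - (i + 1) + 1 by omega]
  exact hw _ (by omega)

theorem HasPath.trans {m n : ℕ} {x y z : Γ} (h₁ : G.HasPath m x y) (h₂ : G.HasPath n y z) :
    G.HasPath (m + n) x z := by
  obtain ⟨u, hu0, hum, hu⟩ := h₁
  obtain ⟨v, hv0, hvn, hv⟩ := h₂
  refine ⟨fun i => if i ≤ m then u i else v (i - m), by simp [hu0], ?_, fun i hi => ?_⟩
  · rcases Nat.eq_zero_or_pos n with rfl | hn
    · simp [hum, ← hv0, hvn]
    · simp [show ¬ m + n ≤ m by omega, hvn]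
  · rcases lt_trichotomy i m with hi' | rfl | hi'
    · simpa [hi'.le, Nat.succ_le_of_lt hi'] using hu i hi'
    · simpa [← hv0, hum] using hv 0 (by omega)
    · simpa [show ¬ i ≤ m by omega, show ¬ i + 1 ≤ m by omega,
        show i + 1 - m = i - m + 1 by omega] using hv (i - m) (by omega)

theorem dist_le_of_hasPath {n : ℕ} {x y : Γ} (h : G.HasPath n x y) : G.dist x y ≤ n :=
  Nat.sInf_le h

variable (G)

theorem hasPath_dist (x y : Γ) : G.HasPath (G.dist x y) x y :=
  Nat.sInf_mem (G.connected x y)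

theorem dist_triangle (x y z : Γ) : G.dist x z ≤ G.dist x y + G.dist y z :=
  dist_le_of_hasPath ((G.hasPath_dist x y).trans (G.hasPath_dist y z))

theorem dist_comm (x y : Γ) : G.dist x y = G.dist y x :=
  le_antisymm (dist_le_of_hasPath (G.hasPath_dist y x).symm)
    (dist_le_of_hasPath (G.hasPath_dist x y).symm)

@[simp]
theorem dist_self (x : Γ) : G.dist x x = 0 :=
  Nat.le_zero.mp <| dist_le_of_hasPath
    ⟨fun _ => x, rfl, rfl, fun _ h => absurd h (Nat.not_lt_zero _)⟩

theorem eq_of_dist_eq_zero {x y : Γ} (h : G.dist x y = 0) : x = y := by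
  obtain ⟨w, h0, hn, -⟩ := G.hasPath_dist x y
  rw [← h0, ← hn, h]

theorem mem_ball {x y : Γ} {r : ℝ} : y ∈ G.ball x r ↔ (G.dist x y : ℝ) < r := Iff.rfl

theorem mem_ball_self {x : Γ} {r : ℝ} (hr : 0 < r) : x ∈ G.ball x r := by
  simpa [mem_ball] using hr

theorem ball_subset_ball_of_dist_add_le {x z : Γ} {r r' : ℝ} (h : (G.dist z x : ℝ) + r ≤ r') :
    G.ball x r ⊆ G.ball z r' := fun y hy => by
  have := G.dist_triangle z x y
  rw [mem_ball] at hy ⊢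
  push_cast [← Nat.cast_le (α := ℝ)] at this
  linarith

theorem ball_one (x : Γ) : G.ball x 1 = {x} := by
  ext y
  simp only [mem_ball, Set.mem_singleton_iff, Nat.cast_lt_one]
  exact ⟨fun h => (G.eq_of_dist_eq_zero h).symm, fun h => h ▸ G.dist_self x⟩

theorem exists_le_dist [Infinite Γ] (hfin : ∀ x r, (G.ball x r).Finite) (x₀ : Γ) (R : ℝ) :
    ∃ u, R ≤ G.dist u x₀ := by
  obtain ⟨u, hu⟩ := (hfin x₀ R).infinite_compl.nonempty
  exact ⟨u, by simpa [mem_ball, G.dist_comm x₀] using hu⟩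

noncomputable def logDist (x₀ x : Γ) : ℝ := Real.log (Real.exp 1 + G.dist x x₀)

theorem one_le_logDist (x₀ x : Γ) : 1 ≤ G.logDist x₀ x := by
  rw [logDist, Real.le_log_iff_exp_le (by positivity)]
  exact le_add_of_nonneg_right (Nat.cast_nonneg _)

theorem log_le_two_mul_logDist {x₀ x : Γ} {t : ℝ} (ht : 0 < t)
    (h : t ≤ Real.exp 1 + 2 * G.dist x x₀) : Real.log t ≤ 2 * G.logDist x₀ x := by
  have he : 2 ≤ Real.exp 1 := by linarith [Real.add_one_le_exp 1]
  have hd : (0 : ℝ) ≤ G.dist x x₀ := Nat.cast_nonneg _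
  calc Real.log t ≤ Real.log ((Real.exp 1 + G.dist x x₀) ^ 2) :=
        Real.log_le_log ht (h.trans (by nlinarith))
    _ = 2 * G.logDist x₀ x := by rw [Real.log_pow, logDist]; norm_num

end Distance

/-! ### Mass -/

section Mass

variable (G : GraphData Γ)

theorem summable_nu (x : Γ) : Summable (G.nu x) :=
  summable_of_ne_finset_zero (s := (G.locFin x).toFinset) fun y hy =>
    le_antisymm (by simpa using hy) (G.nu_nonneg x y)

theorem mu_nonneg (x : Γ) : 0 ≤ G.mu x := tsum_nonneg (G.nu_nonneg x)

theorem mu_pos (x : Γ) : 0 < G.mu x := by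
  obtain ⟨y, hy⟩ := G.deg_pos x
  exact hy.trans_le ((G.summable_nu x).le_tsum y fun z _ => G.nu_nonneg x z)

/-- `μ(A)` as a real number; the junk value `0` on sets of infinite measure is never used. -/
noncomputable def mass (A : Set Γ) : ℝ := (G.muSet A).toReal

theorem mass_nonneg (A : Set Γ) : 0 ≤ G.mass A := ENNReal.toReal_nonneg

theorem muSet_coe_finset (B : Finset Γ) :
    G.muSet B = ENNReal.ofReal (∑ z ∈ B, G.mu z) := by
  rw [muSet, Finset.tsum_subtype' B fun z => ENNReal.ofReal (G.mu z),
    ENNReal.ofReal_sum_of_nonneg fun z _ => G.mu_nonneg z]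

theorem mass_coe_finset (B : Finset Γ) : G.mass B = ∑ z ∈ B, G.mu z := by
  rw [mass, muSet_coe_finset, ENNReal.toReal_ofReal (Finset.sum_nonneg fun z _ => G.mu_nonneg z)]

theorem muSet_ne_top {A : Set Γ} (hA : A.Finite) : G.muSet A ≠ ⊤ := by
  rw [← hA.coe_toFinset, muSet_coe_finset]
  exact ENNReal.ofReal_ne_top

theorem mass_mono {A B : Set Γ} (hB : B.Finite) (h : A ⊆ B) : G.mass A ≤ G.mass B :=
  ENNReal.toReal_mono (G.muSet_ne_top hB)
    (ENNReal.tsum_mono_subtype (fun z => ENNReal.ofReal (G.mu z)) h)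

theorem mu_le_mass {A : Set Γ} (hA : A.Finite) {y : Γ} (hy : y ∈ A) : G.mu y ≤ G.mass A := by
  have := G.mass_mono hA (Set.singleton_subset_iff.mpr hy)
  rwa [← Finset.coe_singleton, mass_coe_finset, Finset.sum_singleton] at this

theorem mass_ball_one (x : Γ) : G.mass (G.ball x 1) = G.mu x := by
  simpa [ball_one] using G.mass_coe_finset {x}

theorem mass_ball_pos (hfin : ∀ x r, (G.ball x r).Finite) (x : Γ) {r : ℝ} (hr : 0 < r) :
    0 < G.mass (G.ball x r) :=
  (G.mu_pos x).trans_le (G.mu_le_mass (hfin x r) (G.mem_ball_self hr))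

end Mass

/-! ### Norms of indicator functions -/

section Indicator

variable (G : GraphData Γ) {p : Γ → ℝ}

theorem tsum_indE_div_rpow (hp : ∀ z, 0 < p z) (B : Finset Γ) {t : ℝ} (ht : 0 < t) :
    ∑' z, (indE (B : Set Γ) z / ENNReal.ofReal t) ^ p z * ENNReal.ofReal (G.mu z)
      = ENNReal.ofReal (∑ z ∈ B, t⁻¹ ^ p z * G.mu z) := by
  rw [tsum_eq_sum (s := B) fun z hz => by
      simp [indE, hz, ENNReal.zero_rpow_of_pos (hp z)],
    ENNReal.ofReal_sum_of_nonneg fun z _ => mul_nonneg (by positivity) (G.mu_nonneg z)]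
  refine Finset.sum_congr rfl fun z hz => ?_
  rw [indE, Set.indicator_of_mem (Finset.mem_coe.mpr hz), Pi.one_apply, one_div,
    ← ENNReal.ofReal_inv_of_pos ht, ENNReal.ofReal_rpow_of_pos (inv_pos.mpr ht),
    ENNReal.ofReal_mul (by positivity)]

theorem vnorm_indE_le (hp : ∀ z, 0 < p z) (B : Finset Γ) {t : ℝ} (ht : 0 < t)
    (h : ∑ z ∈ B, t⁻¹ ^ p z * G.mu z ≤ 1) : G.vnorm p (indE B) ≤ ENNReal.ofReal t :=
  sInf_le ⟨ENNReal.ofReal_pos.mpr ht, ENNReal.ofReal_ne_top,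
    by rw [G.tsum_indE_div_rpow hp B ht]; exact ENNReal.ofReal_le_one.mpr h⟩

/-- A norming constant `t` must satisfy `μ(F) ≤ t ^ p z` at the point `z ∈ F` where `t⁻¹ ^ p z`
is smallest. -/
theorem le_vnorm_indE (hp : ∀ z, 0 < p z) {B F : Finset Γ} (hF : F ⊆ B) (hFpos : 0 < G.mass F)
    {c : ℝ} (hc : ∀ z ∈ F, c ≤ G.mass F ^ (1 / p z)) : ENNReal.ofReal c ≤ G.vnorm p (indE B) := by
  refine le_sInf fun l ⟨hl0, hltop, hmod⟩ => ?_
  set t := l.toReal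
  have ht : 0 < t := ENNReal.toReal_pos hl0.ne' hltop
  rw [← ENNReal.ofReal_toReal hltop, G.tsum_indE_div_rpow hp B ht, ENNReal.ofReal_le_one] at hmod
  rw [← ENNReal.ofReal_toReal hltop]
  refine ENNReal.ofReal_le_ofReal ?_
  rw [mass_coe_finset] at hFpos hc
  obtain ⟨z, hz, hmin⟩ :=
    F.exists_min_image (fun z => t⁻¹ ^ p z) (Finset.nonempty_of_sum_ne_zero hFpos.ne')
  have hmass : ∑ y ∈ F, G.mu y ≤ t ^ p z := by
    have : t⁻¹ ^ p z * ∑ y ∈ F, G.mu y ≤ 1 := by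
      rw [Finset.mul_sum]
      refine le_trans (Finset.sum_le_sum fun y hy => ?_) ((Finset.sum_le_sum_of_subset_of_nonneg hF
        fun y _ _ => mul_nonneg (by positivity) (G.mu_nonneg y)).trans hmod)
      exact mul_le_mul_of_nonneg_right (hmin y hy) (G.mu_nonneg y)
    rwa [Real.inv_rpow ht.le, inv_mul_le_iff₀ (by positivity), mul_one] at this
  calc c ≤ (∑ y ∈ F, G.mu y) ^ (1 / p z) := hc z hz
    _ ≤ (t ^ p z) ^ (1 / p z) := by gcongr; exact one_div_nonneg.mpr (hp z).le
    _ = t := by rw [← Real.rpow_mul ht.le, mul_one_div_cancel (hp z).ne', Real.rpow_one]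

theorem exp_neg_mul_rpow_le_vnorm_indE (hp : ∀ z, 0 < p z) {B F : Finset Γ} (hF : F ⊆ B)
    (hm : 0 < G.mass F) {s K : ℝ} (hK : ∀ z ∈ F, |1 / p z - s| * |Real.log (G.mass F)| ≤ K) :
    ENNReal.ofReal (Real.exp (-K) * G.mass F ^ s) ≤ G.vnorm p (indE B) :=
  G.le_vnorm_indE hp hF hm fun z hz => by
    calc Real.exp (-K) * G.mass F ^ s ≤ G.mass F ^ (1 / p z - s) * G.mass F ^ s := by
          gcongr
          exact exp_neg_le_rpow_of_abs_mul_abs_log_le hm (hK z hz)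
      _ = G.mass F ^ (1 / p z) := by rw [← Real.rpow_add hm, sub_add_cancel]

theorem vnorm_indE_le_exp_mul_rpow (hp : ∀ z, 0 < p z) (B : Finset Γ) (hm : 0 < G.mass B)
    {s K : ℝ} (hK : ∀ z ∈ B, |1 / p z - s| * |Real.log (G.mass B)| ≤ K) :
    G.vnorm p (indE B) ≤ ENNReal.ofReal (Real.exp K * G.mass B ^ s) := by
  refine G.vnorm_indE_le hp B (by positivity) ?_
  calc ∑ z ∈ B, (Real.exp K * G.mass B ^ s)⁻¹ ^ p z * G.mu z
      ≤ ∑ z ∈ B, (G.mass B)⁻¹ * G.mu z := Finset.sum_le_sum fun z hz => by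
        gcongr
        · exact G.mu_nonneg z
        · simpa using inv_mul_rpow_rpow_le hm (Real.exp_pos K) (hp z) (hK z hz)
    _ = 1 := by rw [← Finset.mul_sum, ← mass_coe_finset, inv_mul_cancel₀ hm.ne']

theorem vnorm_indE_le_of_mass_le {pm : ℝ} (hpm : 0 < pm) (hp : ∀ z, pm ≤ p z) (B : Finset Γ)
    {t : ℝ} (ht : 1 ≤ t) (h : G.mass B ≤ t ^ pm) : G.vnorm p (indE B) ≤ ENNReal.ofReal t := by
  refine G.vnorm_indE_le (fun z => hpm.trans_le (hp z)) B (by positivity) ?_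
  calc ∑ z ∈ B, t⁻¹ ^ p z * G.mu z ≤ ∑ z ∈ B, t⁻¹ ^ pm * G.mu z :=
        Finset.sum_le_sum fun z _ => mul_le_mul_of_nonneg_right
          (Real.rpow_le_rpow_of_exponent_ge (by positivity) (inv_le_one_of_one_le₀ ht) (hp z))
          (G.mu_nonneg z)
    _ = (t ^ pm)⁻¹ * G.mass B := by
        rw [← Finset.mul_sum, mass_coe_finset, Real.inv_rpow (by positivity)]
    _ ≤ 1 := by rw [inv_mul_le_one₀ (by positivity)]; exact h

/-- With `A ^ pm = exp (K pm) + c`, the modular of `χ_B / (A μ(B) ^ s)` is at most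
`exp (K pm) / A ^ pm` over `B \ N` and at most `c / A ^ pm` over `B ∩ N`. -/
theorem vnorm_indE_le_of_exceptional {pm : ℝ} (hpm : 0 < pm) (hp : ∀ z, pm ≤ p z)
    (B : Finset Γ) (N : Set Γ) (hm : 1 ≤ G.mass B) {s K c : ℝ} (hs : 0 ≤ s) (hK0 : 0 ≤ K)
    (hc : 0 ≤ c) (hK : ∀ z ∈ B, z ∉ N → |1 / p z - s| * |Real.log (G.mass B)| ≤ K)
    (hN : G.mass (↑B ∩ N) ≤ c * G.mass B ^ (s * pm)) :
    G.vnorm p (indE B) ≤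
      ENNReal.ofReal ((Real.exp (K * pm) + c) ^ (1 / pm) * G.mass B ^ s) := by
  classical
  set m := G.mass B
  set A := (Real.exp (K * pm) + c) ^ (1 / pm)
  have hm0 : 0 < m := one_pos.trans_le hm
  have hApow : A ^ pm = Real.exp (K * pm) + c := by
    rw [← Real.rpow_mul (by positivity), one_div_mul_cancel hpm.ne', Real.rpow_one]
  have hKA : Real.exp K ≤ A := by
    rw [show Real.exp K = Real.exp (K * pm) ^ (1 / pm) by
      rw [← Real.exp_mul, mul_assoc, mul_one_div_cancel hpm.ne', mul_one]]
    exact Real.rpow_le_rpow (by positivity) (by linarith) (by positivity)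
  have hA1 : 1 ≤ A := (Real.one_le_exp hK0).trans hKA
  have hp0 : ∀ z, 0 < p z := fun z => hpm.trans_le (hp z)
  have ht1 : 1 ≤ A * m ^ s := one_le_mul_of_one_le_of_one_le hA1 (Real.one_le_rpow hm hs)
  refine G.vnorm_indE_le hp0 B (by positivity) ?_
  rw [← Finset.sum_filter_not_add_sum_filter B (· ∈ N)]
  have hgood : ∑ z ∈ B with z ∉ N, (A * m ^ s)⁻¹ ^ p z * G.mu z
      ≤ Real.exp (K * pm) / A ^ pm := by
    calc ∑ z ∈ B with z ∉ N, (A * m ^ s)⁻¹ ^ p z * G.mu z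
        ≤ ∑ z ∈ B with z ∉ N, (Real.exp K / A) ^ pm * m⁻¹ * G.mu z := by
          refine Finset.sum_le_sum fun z hz => ?_
          obtain ⟨hzB, hzN⟩ := Finset.mem_filter.mp hz
          refine mul_le_mul_of_nonneg_right ?_ (G.mu_nonneg z)
          refine (inv_mul_rpow_rpow_le hm0 (by positivity) (hp0 z) (hK z hzB hzN)).trans ?_
          exact mul_le_mul_of_nonneg_right (Real.rpow_le_rpow_of_exponent_ge (by positivity)
            ((div_le_one (by positivity)).mpr hKA) (hp z)) (inv_nonneg.mpr hm0.le)
      _ ≤ (Real.exp K / A) ^ pm * m⁻¹ * m := by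
          rw [← Finset.mul_sum]
          gcongr
          rw [show m = ∑ z ∈ B, G.mu z from G.mass_coe_finset B]
          exact Finset.sum_le_sum_of_subset_of_nonneg (Finset.filter_subset _ _)
            fun z _ _ => G.mu_nonneg z
      _ = Real.exp (K * pm) / A ^ pm := by
          rw [mul_assoc, inv_mul_cancel₀ hm0.ne', mul_one, Real.div_rpow (by positivity)
            (by positivity), ← Real.exp_mul]
  have hbad : ∑ z ∈ B with z ∈ N, (A * m ^ s)⁻¹ ^ p z * G.mu z ≤ c / A ^ pm := by
    have hmassN : G.mass (↑B ∩ N) = ∑ z ∈ B with z ∈ N, G.mu z := by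
      rw [← mass_coe_finset, Finset.coe_filter]; rfl
    calc ∑ z ∈ B with z ∈ N, (A * m ^ s)⁻¹ ^ p z * G.mu z
        ≤ ∑ z ∈ B with z ∈ N, (A * m ^ s)⁻¹ ^ pm * G.mu z :=
          Finset.sum_le_sum fun z _ => mul_le_mul_of_nonneg_right
            (Real.rpow_le_rpow_of_exponent_ge (by positivity) (inv_le_one_of_one_le₀ ht1) (hp z))
            (G.mu_nonneg z)
      _ ≤ (A ^ pm * m ^ (s * pm))⁻¹ * (c * m ^ (s * pm)) := by
          rw [← Finset.mul_sum, ← hmassN, Real.inv_rpow (by positivity),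
            Real.mul_rpow (by positivity) (by positivity), ← Real.rpow_mul hm0.le]
          gcongr
      _ = c / A ^ pm := by
          field_simp
  calc _ ≤ Real.exp (K * pm) / A ^ pm + c / A ^ pm := add_le_add hgood hbad
    _ = 1 := by rw [← add_div, hApow, div_self (by positivity)]

end Indicator

/-! ### Decay of the exponent -/

section Exponent

variable {G : GraphData Γ} {p : Γ → ℝ} {x₀ : Γ} {a Ci : ℝ}

/-- `a` is a limit of `1 / p` along points escaping to infinity, so it inherits the bounds
of `1 / p`. -/
theorem mem_Icc_of_abs_inv_sub_le [Infinite Γ] (hfin : ∀ x r, (G.ball x r).Finite) (hCi : 0 < Ci)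
    (hdec : ∀ x, |1 / p x - a| ≤ Ci / G.logDist x₀ x) {lo hi : ℝ}
    (h : ∀ x, 1 / p x ∈ Set.Icc lo hi) : a ∈ Set.Icc lo hi := by
  refine isClosed_Icc.closure_subset_iff.mpr (Set.range_subset_iff.mpr h)
    (Metric.mem_closure_range_iff.mpr fun δ hδ => ?_)
  obtain ⟨u, hu⟩ := G.exists_le_dist hfin x₀ (Real.exp (2 * Ci / δ))
  have hL : 2 * Ci / δ ≤ G.logDist x₀ u := by
    rw [logDist, Real.le_log_iff_exp_le (by positivity)]
    linarith [Real.exp_pos 1]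
  refine ⟨u, ?_⟩
  rw [Real.dist_eq, abs_sub_comm]
  calc |1 / p u - a| ≤ Ci / G.logDist x₀ u := hdec u
    _ ≤ Ci / (2 * Ci / δ) := by gcongr
    _ < δ := by rw [div_div_eq_mul_div]; field_simp; linarith

theorem abs_inv_sub_le_of_mem_ball (hCi : 0 ≤ Ci)
    (hdec : ∀ x, |1 / p x - a| ≤ Ci / G.logDist x₀ x) {x z : Γ} {r : ℝ}
    (hr : 2 * r ≤ G.dist x x₀) (hz : z ∈ G.ball x r) :
    |1 / p z - a| ≤ 2 * Ci / G.logDist x₀ x := by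
  have htri : (G.dist x x₀ : ℝ) ≤ G.dist x z + G.dist z x₀ := by
    exact_mod_cast G.dist_triangle x z x₀
  have hL : G.logDist x₀ x ≤ 2 * G.logDist x₀ z :=
    G.log_le_two_mul_logDist (by positivity) (by rw [mem_ball] at hz; linarith)
  have hLx := G.one_le_logDist x₀ x
  calc |1 / p z - a| ≤ Ci / G.logDist x₀ z := hdec z
    _ ≤ Ci / (G.logDist x₀ x / 2) := by gcongr; linarith
    _ = 2 * Ci / G.logDist x₀ x := by ring

theorem abs_inv_sub_mul_log_le (hCi : 0 ≤ Ci) (hdec : ∀ x, |1 / p x - a| ≤ Ci / G.logDist x₀ x)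
    {z : Γ} {m ε : ℝ} (hε : 0 < ε) (hm : 1 ≤ m) (hz : m ^ ε ≤ G.dist z x₀) :
    |1 / p z - a| * Real.log m ≤ Ci / ε := by
  have hL := G.one_le_logDist x₀ z
  have hlog : Real.log m ≤ G.logDist x₀ z / ε := by
    rw [le_div_iff₀ hε, mul_comm, ← Real.log_rpow (by positivity), logDist]
    exact Real.log_le_log (by positivity) (by linarith [Real.exp_pos 1])
  calc |1 / p z - a| * Real.log m ≤ Ci / G.logDist x₀ z * (G.logDist x₀ z / ε) :=
        mul_le_mul (hdec z) hlog (Real.log_nonneg hm) (by positivity)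
    _ = Ci / ε := by field_simp

theorem LogHolder.pminus_le {p : Γ → ℝ} (hp : G.LogHolder p) (z : Γ) : pminus p ≤ p z :=
  ciInf_le ⟨0, by rintro _ ⟨u, rfl⟩; exact (hp.1 u).le⟩ z

theorem LogHolder.exists_abs_inv_sub_le [Infinite Γ] (hp : G.LogHolder p)
    (hfin : ∀ x r, (G.ball x r).Finite) :
    ∃ x₀ a Ci, 0 < Ci ∧ 0 < a ∧ a ≤ 1 / pminus p ∧
      ∀ x, |1 / p x - a| ≤ Ci / G.logDist x₀ x := by
  have hle := hp.pminus_le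
  obtain ⟨hppos, hpm, ⟨P, hP⟩, -, x₀, a, Ci, hCi, hdec⟩ := hp
  have hP0 : 0 < P := (hppos (Classical.arbitrary Γ)).trans_le (hP ⟨_, rfl⟩)
  obtain ⟨haP, hapm⟩ := mem_Icc_of_abs_inv_sub_le hfin hCi hdec fun z =>
    ⟨one_div_le_one_div_of_le (hppos z) (hP ⟨z, rfl⟩), one_div_le_one_div_of_le hpm (hle z)⟩
  exact ⟨x₀, a, Ci, hCi, (one_div_pos.mpr hP0).trans_le haP, hapm, hdec⟩

end Exponent

/-! ### Doubling -/

structure Doubling (G : GraphData Γ) (CD D : ℝ) : Prop where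
  one_le : 1 ≤ CD
  finite_ball : ∀ x r, (G.ball x r).Finite
  mass_ball_le : ∀ x r s, 0 < s → s ≤ r →
    G.mass (G.ball x r) ≤ CD * (r / s) ^ D * G.mass (G.ball x s)

theorem Standing.exists_doubling {G : GraphData Γ} {D : ℝ} (h : G.Standing D) :
    ∃ CD, G.Doubling CD D := by
  obtain ⟨-, ⟨C, hC, hdbl⟩, -, -, hfin, -⟩ := h
  refine ⟨max C 1, le_max_right _ _, hfin, fun x r s hs hsr => ?_⟩
  have hpow : 0 ≤ (r / s) ^ D := Real.rpow_nonneg (div_pos (hs.trans_le hsr) hs).le D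
  calc G.mass (G.ball x r)
      ≤ (ENNReal.ofReal (C * (r / s) ^ D) * G.muSet (G.ball x s)).toReal :=
        ENNReal.toReal_mono (ENNReal.mul_ne_top ENNReal.ofReal_ne_top
          (G.muSet_ne_top (hfin x s))) (hdbl x r s hs hsr)
    _ = C * (r / s) ^ D * G.mass (G.ball x s) := by
        rw [ENNReal.toReal_mul, ENNReal.toReal_ofReal (by positivity), mass]
    _ ≤ max C 1 * (r / s) ^ D * G.mass (G.ball x s) := by
        gcongr
        · exact G.mass_nonneg _
        · exact le_max_left _ _

namespace Doubling

variable {G : GraphData Γ} {p : Γ → ℝ} {x₀ : Γ} {a Ci CD D pm : ℝ}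

theorem mass_ball_le_of_one_le (hG : G.Doubling CD D) (x₀ : Γ) {T : ℝ} (hT : 1 ≤ T) :
    G.mass (G.ball x₀ T) ≤ CD * T ^ D * G.mu x₀ := by
  simpa [mass_ball_one] using hG.mass_ball_le x₀ T 1 one_pos hT

theorem mass_ball_le_mul_mu (hG : G.Doubling CD D) (x₀ x : Γ) {r : ℝ} (hr : 0 ≤ r) :
    G.mass (G.ball x r) ≤ CD * (1 + G.dist x x₀ + r) ^ D * G.mu x₀ := by
  have hd : (0 : ℝ) ≤ G.dist x x₀ := Nat.cast_nonneg _
  refine (G.mass_mono (hG.finite_ball _ _) (G.ball_subset_ball_of_dist_add_le ?_)).trans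
    (hG.mass_ball_le_of_one_le x₀ (by linarith))
  rw [G.dist_comm]
  linarith

theorem mu_le_mul_mu (hG : G.Doubling CD D) (x₀ x : Γ) :
    G.mu x₀ ≤ CD * (1 + G.dist x x₀) ^ D * G.mu x := by
  have hx₀ : x₀ ∈ G.ball x (1 + G.dist x x₀) := by rw [mem_ball]; linarith
  calc G.mu x₀ ≤ G.mass (G.ball x (1 + G.dist x x₀)) := G.mu_le_mass (hG.finite_ball _ _) hx₀
    _ ≤ CD * ((1 + G.dist x x₀) / 1) ^ D * G.mass (G.ball x 1) :=
        hG.mass_ball_le _ _ _ one_pos (by simp)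
    _ = CD * (1 + G.dist x x₀) ^ D * G.mu x := by rw [div_one, mass_ball_one]

theorem exists_abs_log_mass_ball_le (hG : G.Doubling CD D) (hD : 0 ≤ D) (x₀ : Γ) :
    ∃ c, ∀ x (r : ℝ), 0 < r → r ≤ G.dist x x₀ →
      |Real.log (G.mass (G.ball x r))| ≤ c * G.logDist x₀ x := by
  have hCD : 0 < CD := one_pos.trans_le hG.one_le
  have hμ := G.mu_pos x₀
  refine ⟨|Real.log (CD * G.mu x₀)| + |Real.log (CD / G.mu x₀)| + 2 * D, fun x r hr hrx => ?_⟩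
  have hL := G.one_le_logDist x₀ x
  have hd : (0 : ℝ) ≤ G.dist x x₀ := Nat.cast_nonneg _
  have hm := G.mass_ball_pos hG.finite_ball x hr
  have hupper : Real.log (G.mass (G.ball x r)) ≤
      Real.log (CD * G.mu x₀) + D * (2 * G.logDist x₀ x) := by
    refine (Real.log_le_log hm (hG.mass_ball_le_mul_mu x₀ x hr.le)).trans ?_
    rw [mul_right_comm, Real.log_mul (by positivity) (by positivity), Real.log_rpow (by positivity)]
    gcongr
    exact G.log_le_two_mul_logDist (by positivity) (by linarith [Real.add_one_le_exp 1])
  have hlower : -Real.log (CD / G.mu x₀) - D * (2 * G.logDist x₀ x) ≤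
      Real.log (G.mass (G.ball x r)) := by
    have hmu : G.mu x₀ / (CD * (1 + G.dist x x₀) ^ D) ≤ G.mass (G.ball x r) := by
      rw [div_le_iff₀ (by positivity)]
      calc G.mu x₀ ≤ CD * (1 + G.dist x x₀) ^ D * G.mu x := hG.mu_le_mul_mu x₀ x
        _ ≤ _ := by
          rw [mul_comm]
          gcongr
          exact G.mu_le_mass (hG.finite_ball x r) (G.mem_ball_self hr)
    refine le_trans ?_ (Real.log_le_log (by positivity) hmu)
    rw [Real.log_div hμ.ne' (by positivity), Real.log_mul hCD.ne' (by positivity),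
      Real.log_rpow (by positivity), Real.log_div hCD.ne' hμ.ne']
    have : D * Real.log (1 + G.dist x x₀) ≤ D * (2 * G.logDist x₀ x) :=
      mul_le_mul_of_nonneg_left
        (G.log_le_two_mul_logDist (by positivity) (by linarith [Real.add_one_le_exp 1])) hD
    linarith
  have h₁ := le_mul_of_one_le_right (abs_nonneg (Real.log (CD * G.mu x₀))) hL
  have h₂ := le_mul_of_one_le_right (abs_nonneg (Real.log (CD / G.mu x₀))) hL
  have h₃ := mul_nonneg (abs_nonneg (Real.log (CD * G.mu x₀))) (zero_le_one.trans hL)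
  have h₄ := mul_nonneg (abs_nonneg (Real.log (CD / G.mu x₀))) (zero_le_one.trans hL)
  rw [abs_le]
  constructor <;> linarith [le_abs_self (Real.log (CD * G.mu x₀)),
    le_abs_self (Real.log (CD / G.mu x₀)), mul_nonneg hD (zero_le_one.trans hL)]

theorem div_le_mass_ball (hG : G.Doubling CD D) (x₀ : Γ) {x : Γ} {r : ℝ} (hr : 0 < r)
    (hx : G.dist x x₀ < 2 * r) : G.mu x₀ / (CD * 3 ^ D) ≤ G.mass (G.ball x r) := by
  have hCD : 0 < CD := one_pos.trans_le hG.one_le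
  rw [div_le_iff₀ (by positivity)]
  calc G.mu x₀ ≤ G.mass (G.ball x₀ r) := G.mu_le_mass (hG.finite_ball _ _) (G.mem_ball_self hr)
    _ ≤ G.mass (G.ball x (3 * r)) :=
        G.mass_mono (hG.finite_ball _ _) (G.ball_subset_ball_of_dist_add_le (by linarith))
    _ ≤ CD * (3 * r / r) ^ D * G.mass (G.ball x r) := hG.mass_ball_le _ _ _ hr (by linarith)
    _ = G.mass (G.ball x r) * (CD * 3 ^ D) := by rw [mul_div_cancel_right₀ _ hr.ne']; ring

theorem exists_abs_inv_sub_mul_abs_log_le (hG : G.Doubling CD D) (hD : 0 ≤ D)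
    (hCi : 0 ≤ Ci) (hdec : ∀ x, |1 / p x - a| ≤ Ci / G.logDist x₀ x) :
    ∃ K, ∀ x (r : ℝ), 0 < r → 2 * r ≤ G.dist x x₀ → ∀ z ∈ G.ball x r,
      |1 / p z - a| * |Real.log (G.mass (G.ball x r))| ≤ K := by
  obtain ⟨c, hc⟩ := hG.exists_abs_log_mass_ball_le hD x₀
  refine ⟨2 * Ci * c, fun x r hr hrx z hz => ?_⟩
  have hLx := G.one_le_logDist x₀ x
  calc |1 / p z - a| * |Real.log (G.mass (G.ball x r))|
      ≤ 2 * Ci / G.logDist x₀ x * (c * G.logDist x₀ x) :=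
        mul_le_mul (abs_inv_sub_le_of_mem_ball hCi hdec hrx hz)
          (hc x r hr (by linarith)) (abs_nonneg _) (by positivity)
    _ = 2 * Ci * c := by field_simp

theorem mass_inter_ball_rpow_le (hG : G.Doubling CD D) (A : Set Γ) {m ε : ℝ}
    (hm : 1 ≤ m) (hε : 0 ≤ ε) :
    G.mass (A ∩ G.ball x₀ (m ^ ε)) ≤ CD * G.mu x₀ * m ^ (ε * D) := by
  calc G.mass (A ∩ G.ball x₀ (m ^ ε)) ≤ G.mass (G.ball x₀ (m ^ ε)) :=
        G.mass_mono (hG.finite_ball _ _) Set.inter_subset_right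
    _ ≤ CD * (m ^ ε) ^ D * G.mu x₀ := hG.mass_ball_le_of_one_le x₀ (Real.one_le_rpow hm hε)
    _ = CD * G.mu x₀ * m ^ (ε * D) := by rw [← Real.rpow_mul (by positivity)]; ring

theorem mass_inter_ball_rpow_le_half (hG : G.Doubling CD D) (A : Set Γ) {m ε : ℝ}
    (hm : 1 ≤ m) (hmc : (2 * CD * G.mu x₀) ^ 2 ≤ m) (hε : 0 ≤ ε) (hεD : ε * D ≤ 1 / 2) :
    G.mass (A ∩ G.ball x₀ (m ^ ε)) ≤ m / 2 := by
  have hCμ : 0 ≤ CD * G.mu x₀ := mul_nonneg (by linarith [hG.one_le]) (G.mu_nonneg x₀)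
  have hsqrt : 2 * CD * G.mu x₀ ≤ √m :=
    (Real.le_sqrt (by linarith) (by linarith)).mpr hmc
  calc G.mass (A ∩ G.ball x₀ (m ^ ε)) ≤ CD * G.mu x₀ * m ^ (ε * D) :=
        hG.mass_inter_ball_rpow_le _ hm hε
    _ ≤ CD * G.mu x₀ * √m := by
        rw [Real.sqrt_eq_rpow]
        exact mul_le_mul_of_nonneg_left (Real.rpow_le_rpow_of_exponent_le hm hεD) hCμ
    _ ≤ √m * √m / 2 := by nlinarith [Real.sqrt_nonneg m]
    _ = m / 2 := by rw [Real.mul_self_sqrt (by linarith)]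

/-- Only points within `μ(B) ^ ε` of `x₀` can have an exponent far from `a` at the scale of a
ball of mass `μ(B) ≥ 1`. -/
theorem vnorm_indE_ball_le_of_one_le_mass (hG : G.Doubling CD D) (hpm : 0 < pm)
    (hp : ∀ z, pm ≤ p z) (ha : 0 ≤ a) (hCi : 0 ≤ Ci)
    (hdec : ∀ x, |1 / p x - a| ≤ Ci / G.logDist x₀ x) {ε : ℝ} (hε : 0 < ε)
    (hεD : ε * D ≤ a * pm) {x : Γ} {r : ℝ} (hm : 1 ≤ G.mass (G.ball x r)) :
    G.vnorm p (indE (G.ball x r)) ≤ ENNReal.ofReal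
      ((Real.exp (Ci / ε * pm) + CD * G.mu x₀) ^ (1 / pm) * G.mass (G.ball x r) ^ a) := by
  have hB := (hG.finite_ball x r).coe_toFinset
  rw [← hB] at hm ⊢
  refine G.vnorm_indE_le_of_exceptional hpm hp _ (G.ball x₀ (G.mass (G.ball x r) ^ ε)) hm ha
    (by positivity) (mul_nonneg (zero_le_one.trans hG.one_le) (G.mu_nonneg x₀))
    (fun z _ hz => ?_) ?_
  · rw [abs_of_nonneg (Real.log_nonneg hm), hB]
    rw [hB] at hm
    refine abs_inv_sub_mul_log_le hCi hdec hε hm ?_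
    rwa [mem_ball, not_lt, G.dist_comm] at hz
  · refine (hG.mass_inter_ball_rpow_le _ (hB ▸ hm) hε.le).trans ?_
    rw [hB] at hm ⊢
    exact mul_le_mul_of_nonneg_left (Real.rpow_le_rpow_of_exponent_le hm hεD)
      (mul_nonneg (zero_le_one.trans hG.one_le) (G.mu_nonneg x₀))

theorem le_vnorm_indE_ball_of_le_mass (hG : G.Doubling CD D) (hp : ∀ z, 0 < p z)
    (ha : 0 ≤ a) (hCi : 0 ≤ Ci) (hdec : ∀ x, |1 / p x - a| ≤ Ci / G.logDist x₀ x)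
    {ε : ℝ} (hε : 0 < ε) (hεD : ε * D ≤ 1 / 2) {x : Γ} {r : ℝ} (hm : 2 ≤ G.mass (G.ball x r))
    (hmc : (2 * CD * G.mu x₀) ^ 2 ≤ G.mass (G.ball x r)) :
    ENNReal.ofReal (Real.exp (-(Ci / ε)) * (G.mass (G.ball x r) / 2) ^ a) ≤
      G.vnorm p (indE (G.ball x r)) := by
  classical
  have hB := (hG.finite_ball x r).coe_toFinset
  set m := G.mass (G.ball x r)
  set B := (hG.finite_ball x r).toFinset
  set F := B.filter (· ∉ G.ball x₀ (m ^ ε))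
  have hsplit : G.mass F + G.mass (↑B ∩ G.ball x₀ (m ^ ε)) = m := by
    rw [show (↑B ∩ G.ball x₀ (m ^ ε) : Set Γ) = ↑(B.filter (· ∈ G.ball x₀ (m ^ ε))) by
      ext; simp, mass_coe_finset, mass_coe_finset, Finset.sum_filter_not_add_sum_filter,
      ← mass_coe_finset, hB]
  have hnear := hG.mass_inter_ball_rpow_le_half ↑B (by linarith) hmc hε.le hεD
  have hFm : m / 2 ≤ G.mass F := by linarith
  have hF1 : 1 ≤ G.mass F := by linarith
  have hlogF : |Real.log (G.mass F)| ≤ Real.log m := by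
    rw [abs_of_nonneg (Real.log_nonneg hF1)]
    exact Real.log_le_log (by linarith) (by linarith [G.mass_nonneg (↑B ∩ G.ball x₀ (m ^ ε))])
  have key := G.exp_neg_mul_rpow_le_vnorm_indE hp (B.filter_subset _) (by linarith) (s := a)
    (K := Ci / ε) fun z hz => by
      obtain ⟨-, hzN⟩ := Finset.mem_filter.mp hz
      rw [mem_ball, not_lt, G.dist_comm] at hzN
      exact (mul_le_mul_of_nonneg_left hlogF (abs_nonneg _)).trans
        (abs_inv_sub_mul_log_le hCi hdec hε (by linarith) hzN)
  rw [hB] at key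
  refine le_trans (ENNReal.ofReal_le_ofReal ?_) key
  gcongr

theorem exists_vnorm_indE_ball_le (hG : G.Doubling CD D) (hD : 0 < D) (hpm : 0 < pm)
    (hp : ∀ z, pm ≤ p z) (ha : 0 < a) (hCi : 0 ≤ Ci)
    (hdec : ∀ x, |1 / p x - a| ≤ Ci / G.logDist x₀ x) :
    ∃ A > 0, ∀ x (r : ℝ), 0 < r →
      G.vnorm p (indE (G.ball x r)) ≤ ENNReal.ofReal (A * G.mass (G.ball x r) ^ a) := by
  obtain ⟨K, hK⟩ := hG.exists_abs_inv_sub_mul_abs_log_le hD.le hCi hdec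
  set m₀ := G.mu x₀ / (CD * 3 ^ D)
  have hm₀ : 0 < m₀ := div_pos (G.mu_pos x₀) (by have := hG.one_le; positivity)
  set ε := a * pm / D
  set A := (Real.exp (Ci / ε * pm) + CD * G.mu x₀) ^ (1 / pm)
  refine ⟨max (Real.exp K) (max (m₀ ^ (-a)) A), by positivity, fun x r hr => ?_⟩
  have hm := G.mass_ball_pos hG.finite_ball x hr
  suffices h : ∃ A' ≤ max (Real.exp K) (max (m₀ ^ (-a)) A),
      G.vnorm p (indE (G.ball x r)) ≤ ENNReal.ofReal (A' * G.mass (G.ball x r) ^ a) by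
    obtain ⟨A', hA', h⟩ := h
    exact h.trans (ENNReal.ofReal_le_ofReal (by gcongr))
  have hB := (hG.finite_ball x r).coe_toFinset
  by_cases hsmall : 2 * r ≤ G.dist x x₀
  · refine ⟨_, le_max_left _ _, ?_⟩
    have := G.vnorm_indE_le_exp_mul_rpow (fun z => hpm.trans_le (hp z)) _ (hB ▸ hm) (s := a)
      fun z hz => by rw [hB]; exact hK x r hr hsmall z (by simpa using hz)
    rwa [hB] at this
  by_cases hm1 : 1 ≤ G.mass (G.ball x r)
  · exact ⟨_, le_max_of_le_right (le_max_right _ _), hG.vnorm_indE_ball_le_of_one_le_mass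
      hpm hp ha.le hCi hdec (by positivity) (div_mul_cancel₀ _ hD.ne').le hm1⟩
  have hm₀m : m₀ ≤ G.mass (G.ball x r) := hG.div_le_mass_ball x₀ hr (by linarith)
  have hle1 : G.vnorm p (indE (G.ball x r)) ≤ ENNReal.ofReal 1 := by
    have := G.vnorm_indE_le_of_mass_le hpm hp _ le_rfl (by rw [hB, Real.one_rpow]; linarith)
    rwa [hB] at this
  refine ⟨_, le_max_of_le_right (le_max_left _ _), hle1.trans (ENNReal.ofReal_le_ofReal ?_)⟩
  calc (1 : ℝ) = m₀ ^ (-a) * m₀ ^ a := by rw [← Real.rpow_add hm₀, neg_add_cancel, Real.rpow_zero]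
    _ ≤ m₀ ^ (-a) * G.mass (G.ball x r) ^ a := by gcongr

theorem exists_le_vnorm_indE_ball (hG : G.Doubling CD D) (hD : 0 < D) (hpm : 0 < pm)
    (hp : ∀ z, pm ≤ p z) (ha : 0 < a) (hCi : 0 ≤ Ci)
    (hdec : ∀ x, |1 / p x - a| ≤ Ci / G.logDist x₀ x) :
    ∃ c > 0, ∀ x (r : ℝ), 0 < r →
      ENNReal.ofReal (c * G.mass (G.ball x r) ^ a) ≤ G.vnorm p (indE (G.ball x r)) := by
  have hp0 : ∀ z, 0 < p z := fun z => hpm.trans_le (hp z)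
  obtain ⟨K, hK⟩ := hG.exists_abs_inv_sub_mul_abs_log_le hD.le hCi hdec
  set m₀ := G.mu x₀ / (CD * 3 ^ D)
  have hm₀ : 0 < m₀ := div_pos (G.mu_pos x₀) (by have := hG.one_le; positivity)
  set M₀ := max 2 ((2 * CD * G.mu x₀) ^ 2)
  have hM₀ : 0 < M₀ := lt_max_of_lt_left two_pos
  set ε := 1 / 2 / D
  set c := min (Real.exp (-K)) (min (min 1 (m₀ ^ (1 / pm)) / M₀ ^ a)
    (Real.exp (-(Ci / ε)) / 2 ^ a))
  refine ⟨c, by positivity, fun x r hr => ?_⟩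
  have hm := G.mass_ball_pos hG.finite_ball x hr
  suffices h : ∃ c' ≥ c,
      ENNReal.ofReal (c' * G.mass (G.ball x r) ^ a) ≤ G.vnorm p (indE (G.ball x r)) by
    obtain ⟨c', hc', h⟩ := h
    exact (ENNReal.ofReal_le_ofReal (by gcongr)).trans h
  have hB := (hG.finite_ball x r).coe_toFinset
  by_cases hsmall : 2 * r ≤ G.dist x x₀
  · refine ⟨_, min_le_left _ _, ?_⟩
    have := G.exp_neg_mul_rpow_le_vnorm_indE hp0 subset_rfl (hB ▸ hm) (s := a)
      fun z hz => by rw [hB]; exact hK x r hr hsmall z (by simpa using hz)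
    rwa [hB] at this
  by_cases hmM : M₀ ≤ G.mass (G.ball x r)
  · refine ⟨_, min_le_of_right_le (min_le_right _ _), ?_⟩
    have := hG.le_vnorm_indE_ball_of_le_mass hp0 ha.le hCi hdec (ε := ε) (by positivity)
      (div_mul_cancel₀ _ hD.ne').le ((le_max_left _ _).trans hmM) ((le_max_right _ _).trans hmM)
    rw [div_mul_eq_mul_div]
    rwa [Real.div_rpow hm.le zero_le_two, ← mul_div_assoc] at this
  have hm₀m : m₀ ≤ G.mass (G.ball x r) := hG.div_le_mass_ball x₀ hr (by linarith)
  refine ⟨_, min_le_of_right_le (min_le_left _ _), ?_⟩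
  have := G.le_vnorm_indE hp0 subset_rfl (hB ▸ hm) (c := min 1 (m₀ ^ (1 / pm))) fun z _ => by
    rw [hB]
    exact min_one_rpow_le_rpow hm₀ hm₀m (one_div_nonneg.mpr (hp0 z).le)
      (one_div_le_one_div_of_le hpm (hp z))
  rw [hB] at this
  refine le_trans (ENNReal.ofReal_le_ofReal ?_) this
  rw [div_mul_eq_mul_div, div_le_iff₀ (by positivity)]
  exact mul_le_mul_of_nonneg_left (Real.rpow_le_rpow hm.le (not_le.mp hmM).le ha.le)
    (by positivity)

theorem mass_ball_mul_rpow_le (hG : G.Doubling CD D) (ha : 0 ≤ a) (x : Γ) {β r : ℝ} (hβ : 1 ≤ β)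
    (hr : 0 < r) :
    G.mass (G.ball x (β * r)) ^ a ≤ CD ^ a * β ^ (D * a) * G.mass (G.ball x r) ^ a := by
  have hm := G.mass_nonneg (G.ball x r)
  have hdbl := hG.mass_ball_le x (β * r) r hr (le_mul_of_one_le_left hr.le hβ)
  rw [mul_div_cancel_right₀ _ hr.ne'] at hdbl
  calc G.mass (G.ball x (β * r)) ^ a ≤ (CD * β ^ D * G.mass (G.ball x r)) ^ a :=
        Real.rpow_le_rpow (G.mass_nonneg _) hdbl ha
    _ = CD ^ a * β ^ (D * a) * G.mass (G.ball x r) ^ a := by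
        rw [Real.mul_rpow (by have := hG.one_le; positivity) hm,
          Real.mul_rpow (by linarith [hG.one_le]) (by positivity), ← Real.rpow_mul (by positivity)]

end Doubling

end GraphData

theorem lemma_coc_i_general {Γ : Type*} [Infinite Γ] (G : GraphData Γ) (D : ℝ)
    (hG : G.Standing D) (p : Γ → ℝ) (hp : G.LogHolder p)
    (w : ℝ) (hw0 : 0 < w) (hw : w < pminus p) :
    ∃ C > (0 : ℝ), ∀ (x : Γ) (β r : ℝ), 1 < β → 0 < r →
      G.vnorm p (indE (G.ball x (β * r))) ≤
        ENNReal.ofReal (C * β ^ (D / w)) * G.vnorm p (indE (G.ball x r)) := by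
  obtain ⟨CD, hdbl⟩ := hG.exists_doubling
  obtain ⟨x₀, a, Ci, hCi, ha, hapm, hdec⟩ := hp.exists_abs_inv_sub_le hdbl.finite_ball
  have hpm : 0 < pminus p := hp.2.1
  obtain ⟨A, hA, hupper⟩ := hdbl.exists_vnorm_indE_ball_le hG.1 hpm hp.pminus_le ha hCi.le hdec
  obtain ⟨c, hc, hlower⟩ := hdbl.exists_le_vnorm_indE_ball hG.1 hpm hp.pminus_le ha hCi.le hdec
  have hCD := hdbl.one_le
  have hexp : D * a ≤ D / w := by
    rw [← mul_one_div]
    exact mul_le_mul_of_nonneg_left (hapm.trans (one_div_le_one_div_of_le hw0 hw.le)) hG.1.le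
  refine ⟨A * CD ^ a / c, by positivity, fun x β r hβ hr => ?_⟩
  calc G.vnorm p (indE (G.ball x (β * r)))
      ≤ ENNReal.ofReal (A * G.mass (G.ball x (β * r)) ^ a) := hupper x _ (by positivity)
    _ ≤ ENNReal.ofReal (A * (CD ^ a * β ^ (D / w) * G.mass (G.ball x r) ^ a)) := by
        gcongr
        refine (hdbl.mass_ball_mul_rpow_le ha.le x hβ.le hr).trans ?_
        have hm := G.mass_nonneg (G.ball x r)
        gcongr
        · exact hβ.le
    _ = ENNReal.ofReal (A * CD ^ a / c * β ^ (D / w)) *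
          ENNReal.ofReal (c * G.mass (G.ball x r) ^ a) := by
        rw [← ENNReal.ofReal_mul (by positivity)]
        congr 1
        field_simp
    _ ≤ ENNReal.ofReal (A * CD ^ a / c * β ^ (D / w)) * G.vnorm p (indE (G.ball x r)) := by
        gcongr
        exact hlower x r hr

/-- Growth of `‖χ_B‖_{p(·)}` under dilation of balls. -/
theorem lemma_coc_i {Γ : Type*} [Countable Γ] [Infinite Γ] (G : GraphData Γ) (D : ℝ)
    (hG : G.Standing D) (p : Γ → ℝ) (hp : G.LogHolder p)
    (w : ℝ) (hw0 : 0 < w) (hw : w < pminus p) :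
    ∃ C > (0 : ℝ), ∀ (x : Γ) (β r : ℝ), 1 < β → 0 < r →
      G.vnorm p (indE (G.ball x (β * r))) ≤
        ENNReal.ofReal (C * β ^ (D / w)) * G.vnorm p (indE (G.ball x r)) :=
  lemma_coc_i_general G D hG p hp w hw0 hw

end VarHardy
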